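/- Let E be a vector bundle on ℙ¹×ℙ¹ with p: ℙ¹×ℙ¹ → ℙ¹ the first projection, and suppose for some n that E(0,n) has cohomology only in degree 1 (H⁰(E(0,n)) = H²(E(0,n)) = 0) and E(1,n) has cohomology only in degree 0 (H¹(E(1,n)) = H²(E(1,n)) = 0). Then R¹p_*(E(0,n)) = 0 and F = p_*(E(0,n)) is a vector bundle on ℙ¹ isomorphic to a direct sum of copies of O(-1) and O(-2); in particular F(m) has natural cohomology (cohomology in at most one degree) for every m ∈ ℤ. -/

import Mathlib

/-- A coherent sheaf on `ℙ¹` decomposes as (torsion of length `t`) ⊕ `⊕ᵢ O(d i)`.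
`dim H⁰(F(m)) = t + ∑ᵢ max(d i + m + 1, 0)` (torsion contributes its length in every
twist, `h⁰(O(d)) = max(d+1,0)`). -/
def h0Coh (t : ℕ) {k : ℕ} (d : Fin k → ℤ) (m : ℤ) : ℕ := t + ∑ i, (d i + m + 1).toNat

/-- `dim H¹(F(m)) = ∑ᵢ max(-(d i + m) - 1, 0)` for such a coherent sheaf on `ℙ¹`. -/
def h1Coh (_t : ℕ) {k : ℕ} (d : Fin k → ℤ) (m : ℤ) : ℕ := ∑ i, (-(d i + m) - 1).toNat

/-!
Twisting by `O(m)` moves every splitting degree of `p_*E(0,n)` and `R¹p_*E(0,n)` by `m`,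
and `h⁰(O(d)) = 0 ↔ d ≤ -1`, `h¹(O(d)) = 0 ↔ d ≥ -1`, while torsion is seen by `H⁰` in
every twist. The vanishings at `m = 0, 1` therefore confine the degrees of
`p_*E(0,n)` to `[-2, -1]`, kill its torsion and that of `R¹p_*E(0,n)`, and force every
degree of `R¹p_*E(0,n)` to be both `≤ -2` and `≥ -1`, so there are none. A split bundle
whose degrees lie in an interval of length one has natural cohomology.
-/

theorem Finset.sum_toNat_eq_zero_iff {ι : Type*} {s : Finset ι} {f : ι → ℤ} :
    ∑ i ∈ s, (f i).toNat = 0 ↔ ∀ i ∈ s, f i ≤ 0 := by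
  simp only [Finset.sum_eq_zero_iff, Int.toNat_eq_zero]

theorem h0Coh_eq_zero_iff {t k : ℕ} {d : Fin k → ℤ} {m : ℤ} :
    h0Coh t d m = 0 ↔ t = 0 ∧ ∀ i, d i ≤ -m - 1 := by
  simp only [h0Coh, Nat.add_eq_zero_iff, Finset.sum_toNat_eq_zero_iff, Finset.mem_univ,
    true_implies]
  exact and_congr_right fun _ => forall_congr' fun _ => by omega

theorem h1Coh_eq_zero_iff {t k : ℕ} {d : Fin k → ℤ} {m : ℤ} :
    h1Coh t d m = 0 ↔ ∀ i, -m - 1 ≤ d i := by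
  simp only [h1Coh, Finset.sum_toNat_eq_zero_iff, Finset.mem_univ, true_implies]
  exact forall_congr' fun _ => by omega

theorem h0Coh_eq_zero_or_h1Coh_eq_zero {t k : ℕ} {d : Fin k → ℤ}
    (hd : ∀ i j, d i ≤ d j + 1) (m : ℤ) : h0Coh 0 d m = 0 ∨ h1Coh t d m = 0 := by
  rw [h0Coh_eq_zero_iff, h1Coh_eq_zero_iff]
  by_cases hneg : ∀ i, d i ≤ -m - 1
  · exact Or.inl ⟨rfl, hneg⟩
  · obtain ⟨i, hi⟩ := not_forall.mp hneg
    exact Or.inr fun j => by linarith [not_le.mp hi, hd i j]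

/-- Let `E` be a vector bundle on `ℙ¹×ℙ¹`, `p` the first projection, and write the
coherent sheaves `p_*(E(0,n))` and `R¹p_*(E(0,n))` on `ℙ¹` in the form
(torsion of length `t`) ⊕ `⊕ O(d i)`, with data `(t₀, d₀)` and `(t₁, d₁)` respectively.
Let `e i m = dim Hⁱ(E(m,n))`; by the projection formula and the Künneth/Leray formula
`e 0 m = h⁰(F₀(m))`, `e 1 m = h¹(F₀(m)) + h⁰(F₁(m))`, `e 2 m = h¹(F₁(m))`.
If `E(0,n)` has cohomology only in degree 1 and `E(1,n)` only in degree 0, then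
`R¹p_*(E(0,n)) = 0` and `F₀ = p_*(E(0,n))` is a vector bundle which is a direct sum of
copies of `O(-1)` and `O(-2)`; in particular every twist `F₀(m)` has cohomology in at
most one degree. -/
theorem pushforward_vanishing_and_splitting
    (t₀ t₁ k₀ k₁ : ℕ) (d₀ : Fin k₀ → ℤ) (d₁ : Fin k₁ → ℤ)
    (e : ℕ → ℤ → ℕ)
    (kunneth0 : ∀ m : ℤ, e 0 m = h0Coh t₀ d₀ m)
    (kunneth1 : ∀ m : ℤ, e 1 m = h1Coh t₀ d₀ m + h0Coh t₁ d₁ m)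
    (kunneth2 : ∀ m : ℤ, e 2 m = h1Coh t₁ d₁ m)
    (hE0n_only_H1 : e 0 0 = 0 ∧ e 2 0 = 0)
    (hE1n_only_H0 : e 1 1 = 0 ∧ e 2 1 = 0) :
    (t₁ = 0 ∧ k₁ = 0) ∧ t₀ = 0 ∧ (∀ i, d₀ i = -1 ∨ d₀ i = -2) ∧
      (∀ m : ℤ, h0Coh t₀ d₀ m = 0 ∨ h1Coh t₀ d₀ m = 0) := by
  obtain ⟨ht₀, hd₀_le⟩ := h0Coh_eq_zero_iff.mp ((kunneth0 0).symm.trans hE0n_only_H1.1)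
  have hd₁_ge := h1Coh_eq_zero_iff.mp ((kunneth2 0).symm.trans hE0n_only_H1.2)
  have h1_vanish := (kunneth1 1).symm.trans hE1n_only_H0.1
  have hd₀_ge := h1Coh_eq_zero_iff.mp (Nat.eq_zero_of_add_eq_zero_right h1_vanish)
  obtain ⟨ht₁, hd₁_le⟩ := h0Coh_eq_zero_iff.mp (Nat.eq_zero_of_add_eq_zero_left h1_vanish)
  have hk₁ : k₁ = 0 :=
    Nat.eq_zero_of_not_pos fun hk => by linarith [hd₁_le ⟨0, hk⟩, hd₁_ge ⟨0, hk⟩]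
  subst ht₀
  refine ⟨⟨ht₁, hk₁⟩, rfl, fun i => ?_, h0Coh_eq_zero_or_h1Coh_eq_zero fun i j => ?_⟩
  · have := hd₀_le i; have := hd₀_ge i; omega
  · have := hd₀_le i; have := hd₀_ge j; omega
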